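/- Every diversity game in which all agents have identical preferences over the red ratios in Θ \ {0, 1} satisfies the top coalition property: for every nonempty set S of agents, there exists a nonempty T ⊆ S such that every agent in T weakly prefers T to every other coalition T' ⊆ S containing that agent. -/

import Mathlib

/-!
Fix `S` and let `θ*` be the best ratio, for the common preference, among the ratios of the mixed
coalitions contained in `S`. A coalition `T' ⊆ S` containing `i` is either mixed or monochromatic
of `i`'s colour, so its ratio is either weakly worse than `θ*` for everybody or the "pure" ratio
of `i` (`1` or `0`). If some agent of `S` prefers her pure ratio to every mixed one, she alone is a
top coalition; otherwise every agent prefers `θ*` to her pure ratio, and any mixed coalition with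
ratio `θ*` is a top coalition.
-/

open Finset

/-- The red ratio of a finite coalition. -/
def redRatio {α : Type*} (red : α → Prop) [DecidablePred red] (S : Finset α) : ℚ :=
  ((S.filter red).card : ℚ) / (S.card : ℚ)

/-- The set `Θ` of possible red ratios `r/s`, `0 ≤ r ≤ |R|`, `1 ≤ s ≤ |R|+|B|`. -/
def ratioSet {α : Type*} [Fintype α] (red : α → Prop) [DecidablePred red] : Finset ℚ :=
  (Finset.Icc 1 (Fintype.card α)).biUnion fun s =>
    (Finset.range ((univ.filter red).card + 1)).image fun r : ℕ => (r : ℚ) / (s : ℚ)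

theorem Finset.exists_forall_eq_or_rel {β : Type*} {r : β → β → Prop}
    (htrans : ∀ ⦃x y z⦄, r x y → r y z → r x z) {s : Finset β}
    (htotal : ∀ x ∈ s, ∀ y ∈ s, x ≠ y → r x y ∨ r y x) (hs : s.Nonempty) :
    ∃ m ∈ s, ∀ x ∈ s, m = x ∨ r m x := by
  induction hs using Finset.Nonempty.cons_induction with
  | singleton a => exact ⟨a, mem_singleton_self a, by simp⟩
  | cons a s _ _ ih =>
    have htotal' : ∀ x ∈ s, ∀ y ∈ s, x ≠ y → r x y ∨ r y x := fun x hx y hy =>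
      htotal x (mem_cons_of_mem hx) y (mem_cons_of_mem hy)
    obtain ⟨m, hm, hmax⟩ := ih htotal'
    by_cases hma : m = a ∨ r m a
    · refine ⟨m, mem_cons_of_mem hm, fun x hx => ?_⟩
      rcases mem_cons.1 hx with rfl | hx
      exacts [hma, hmax x hx]
    · obtain ⟨hne, hnr⟩ := not_or.1 hma
      have ham : r a m :=
        (htotal a (mem_cons_self a s) m (mem_cons_of_mem hm) (Ne.symm hne)).resolve_right hnr
      refine ⟨a, mem_cons_self a s, fun x hx => ?_⟩
      rcases mem_cons.1 hx with rfl | hx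
      · exact Or.inl rfl
      · rcases hmax x hx with rfl | hmx
        exacts [Or.inr ham, Or.inr (htrans ham hmx)]

section RedRatio

variable {α : Type*} (red : α → Prop) [DecidablePred red]

/-- The red ratio of a monochromatic coalition containing `i`. -/
def pureRatio (i : α) : ℚ := if red i then 1 else 0

def mixedRatios (S : Finset α) : Finset ℚ :=
  (S.powerset.filter fun T => (∃ x ∈ T, red x) ∧ ∃ x ∈ T, ¬ red x).image (redRatio red)

def IsTopCoalition (pref : α → ℚ → ℚ → Prop) (S T : Finset α) : Prop :=
  ∀ i ∈ T, ∀ T' ⊆ S, i ∈ T' →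
    redRatio red T = redRatio red T' ∨ pref i (redRatio red T) (redRatio red T')

variable {red}

theorem redRatio_eq_one {S : Finset α} (hS : S.Nonempty) (h : ∀ x ∈ S, red x) :
    redRatio red S = 1 := by
  rw [redRatio, filter_true_of_mem h, div_self]
  exact_mod_cast hS.card_pos.ne'

theorem redRatio_eq_zero {S : Finset α} (h : ∀ x ∈ S, ¬ red x) : redRatio red S = 0 := by
  simp [redRatio, filter_false_of_mem h]

theorem redRatio_singleton (i : α) : redRatio red {i} = pureRatio red i := by
  unfold pureRatio
  split_ifs with hi
  · exact redRatio_eq_one (singleton_nonempty i) (by simpa using hi)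
  · exact redRatio_eq_zero (by simpa using hi)

theorem redRatio_ne_zero {S : Finset α} (h : ∃ x ∈ S, red x) : redRatio red S ≠ 0 := by
  obtain ⟨x, hx, hrx⟩ := h
  have hred : 0 < (S.filter red).card := card_pos.2 ⟨x, mem_filter.2 ⟨hx, hrx⟩⟩
  have hS : 0 < S.card := card_pos.2 ⟨x, hx⟩
  exact (div_pos (by exact_mod_cast hred) (by exact_mod_cast hS)).ne'

theorem redRatio_ne_one {S : Finset α} (h : ∃ x ∈ S, ¬ red x) : redRatio red S ≠ 1 := by
  obtain ⟨x, hx, hrx⟩ := h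
  have hlt : (S.filter red).card < S.card :=
    card_lt_card ⟨filter_subset _ _, fun hS => hrx (mem_filter.1 (hS hx)).2⟩
  have hS : (0 : ℚ) < S.card := by exact_mod_cast card_pos.2 ⟨x, hx⟩
  rw [redRatio, Ne, div_eq_one_iff_eq hS.ne']
  exact_mod_cast hlt.ne

theorem redRatio_mem_ratioSet [Fintype α] {S : Finset α} (hS : S.Nonempty) :
    redRatio red S ∈ ratioSet red := by
  refine mem_biUnion.2 ⟨S.card, mem_Icc.2 ⟨hS.card_pos, card_le_univ S⟩, mem_image.2 ?_⟩
  refine ⟨(S.filter red).card, mem_range.2 (Nat.lt_succ_of_le ?_), rfl⟩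
  exact card_le_card (filter_subset_filter red (subset_univ S))

theorem pureRatio_mem_ratioSet [Fintype α] (i : α) : pureRatio red i ∈ ratioSet red :=
  redRatio_singleton (red := red) i ▸ redRatio_mem_ratioSet (singleton_nonempty i)

theorem mem_ratioSet_of_mem_mixedRatios [Fintype α] {S : Finset α} {θ : ℚ}
    (hθ : θ ∈ mixedRatios red S) : θ ∈ ratioSet red ∧ θ ≠ 0 ∧ θ ≠ 1 := by
  obtain ⟨T, hT, rfl⟩ := mem_image.1 hθ
  obtain ⟨-, ⟨x, hx, hxred⟩, hblue⟩ := mem_filter.1 hT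
  exact ⟨redRatio_mem_ratioSet ⟨x, hx⟩, redRatio_ne_zero ⟨x, hx, hxred⟩, redRatio_ne_one hblue⟩

theorem redRatio_mem_mixedRatios_or_eq_pureRatio {S T : Finset α} {i : α} (hTS : T ⊆ S)
    (hi : i ∈ T) : redRatio red T ∈ mixedRatios red S ∨ redRatio red T = pureRatio red i := by
  by_cases hmixed : (∃ x ∈ T, red x) ∧ ∃ x ∈ T, ¬ red x
  · exact Or.inl (mem_image_of_mem _ (mem_filter.2 ⟨mem_powerset.2 hTS, hmixed⟩))
  · refine Or.inr ?_
    unfold pureRatio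
    split_ifs with hred
    · exact redRatio_eq_one ⟨i, hi⟩ fun x hx =>
        by_contra fun hx' => hmixed ⟨⟨i, hi, hred⟩, x, hx, hx'⟩
    · exact redRatio_eq_zero fun x hx hx' => hmixed ⟨⟨x, hx, hx'⟩, ⟨i, hi, hred⟩⟩

theorem isTopCoalition_of_forall_mixedRatios {pref : α → ℚ → ℚ → Prop} {S T : Finset α}
    (hmixed : ∀ i ∈ T, ∀ θ ∈ mixedRatios red S, redRatio red T = θ ∨ pref i (redRatio red T) θ)
    (hpure : ∀ i ∈ T,
      redRatio red T = pureRatio red i ∨ pref i (redRatio red T) (pureRatio red i)) :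
    IsTopCoalition red pref S T := by
  intro i hi T' hT'S hiT'
  rcases redRatio_mem_mixedRatios_or_eq_pureRatio (red := red) hT'S hiT' with hT' | hT'
  · exact hmixed i hi _ hT'
  · exact hT' ▸ hpure i hi

theorem exists_mem_mixedRatios_forall_eq_or_pref [Fintype α] {pref : α → ℚ → ℚ → Prop}
    (htrans : ∀ i ⦃θ₁ θ₂ θ₃⦄, pref i θ₁ θ₂ → pref i θ₂ θ₃ → pref i θ₁ θ₃)
    (htotal : ∀ i, ∀ θ ∈ ratioSet red, ∀ θ' ∈ ratioSet red,
      θ ≠ θ' → pref i θ θ' ∨ pref i θ' θ)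
    (hsame : ∀ i j : α, ∀ θ ∈ ratioSet red, ∀ θ' ∈ ratioSet red,
      θ ≠ 0 → θ ≠ 1 → θ' ≠ 0 → θ' ≠ 1 → (pref i θ θ' ↔ pref j θ θ'))
    (a : α) {S : Finset α} (hS : (mixedRatios red S).Nonempty) :
    ∃ θ ∈ mixedRatios red S, ∀ i, ∀ θ' ∈ mixedRatios red S, θ = θ' ∨ pref i θ θ' := by
  obtain ⟨θ, hθ, hbest⟩ := exists_forall_eq_or_rel (htrans a) (fun θ hθ θ' hθ' =>
    htotal a θ (mem_ratioSet_of_mem_mixedRatios hθ).1 θ' (mem_ratioSet_of_mem_mixedRatios hθ').1) hS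
  refine ⟨θ, hθ, fun i θ' hθ' => (hbest θ' hθ').imp_right fun hpref => ?_⟩
  obtain ⟨hθΘ, hθ0, hθ1⟩ := mem_ratioSet_of_mem_mixedRatios hθ
  obtain ⟨hθ'Θ, hθ'0, hθ'1⟩ := mem_ratioSet_of_mem_mixedRatios hθ'
  exact (hsame a i θ hθΘ θ' hθ'Θ hθ0 hθ1 hθ'0 hθ'1).1 hpref

end RedRatio

theorem stmt2_general {α : Type*} [Fintype α] (red : α → Prop) [DecidablePred red]
    (pref : α → ℚ → ℚ → Prop)
    (htrans : ∀ i, Transitive (pref i))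
    (htotal : ∀ i, ∀ θ ∈ ratioSet red, ∀ θ' ∈ ratioSet red,
      θ ≠ θ' → pref i θ θ' ∨ pref i θ' θ)
    (hsame : ∀ i j : α, ∀ θ ∈ ratioSet red, ∀ θ' ∈ ratioSet red,
      θ ≠ 0 → θ ≠ 1 → θ' ≠ 0 → θ' ≠ 1 → (pref i θ θ' ↔ pref j θ θ')) :
    ∀ S : Finset α, S.Nonempty → ∃ T ⊆ S, T.Nonempty ∧
      ∀ i ∈ T, ∀ T' ⊆ S, i ∈ T' →
        redRatio red T = redRatio red T' ∨ pref i (redRatio red T) (redRatio red T') := by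
  intro S ⟨a, ha⟩
  by_cases hsingle : ∃ i ∈ S, ∀ θ ∈ mixedRatios red S,
      pureRatio red i = θ ∨ pref i (pureRatio red i) θ
  · obtain ⟨i, hi, hbest⟩ := hsingle
    refine ⟨{i}, singleton_subset_iff.2 hi, singleton_nonempty i,
      isTopCoalition_of_forall_mixedRatios ?_ ?_⟩ <;>
      intro j hj <;> rw [mem_singleton.1 hj, redRatio_singleton]
    exacts [hbest, Or.inl rfl]
  · push Not at hsingle
    obtain ⟨θ₀, hθ₀, -⟩ := hsingle a ha
    obtain ⟨θ, hθ, hbest⟩ :=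
      exists_mem_mixedRatios_forall_eq_or_pref htrans htotal hsame a ⟨θ₀, hθ₀⟩
    obtain ⟨T, hT, rfl⟩ := mem_image.1 hθ
    obtain ⟨hTS, ⟨x, hx, -⟩, -⟩ := mem_filter.1 hT
    refine ⟨T, mem_powerset.1 hTS, ⟨x, hx⟩,
      isTopCoalition_of_forall_mixedRatios (fun i _ => hbest i) fun i hi => ?_⟩
    by_contra hworse
    obtain ⟨hne, hnpref⟩ := not_or.1 hworse
    have hpure : pref i (pureRatio red i) (redRatio red T) :=
      (htotal i _ (mem_ratioSet_of_mem_mixedRatios hθ).1 _ (pureRatio_mem_ratioSet i)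
        hne).resolve_left hnpref
    obtain ⟨θ', hθ', -, hnpref'⟩ := hsingle i (mem_powerset.1 hTS hi)
    rcases hbest i θ' hθ' with rfl | hθθ'
    · exact hnpref' hpure
    · exact hnpref' (htrans i hpure hθθ')

/-- Every diversity game in which all agents have identical (strict
linear) preferences over the red ratios in `Θ \ {0, 1}` satisfies the top coalition
property: for every nonempty set `S` of agents there is a nonempty `T ⊆ S` such
that every agent of `T` weakly prefers `T` to every coalition `T' ⊆ S` containing
her. -/
theorem stmt2 {α : Type*} [Fintype α] [DecidableEq α] (red : α → Prop) [DecidablePred red]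
    (pref : α → ℚ → ℚ → Prop)
    (hirr : ∀ i (θ : ℚ), ¬ pref i θ θ)
    (htrans : ∀ i, Transitive (pref i))
    (htotal : ∀ i, ∀ θ ∈ ratioSet red, ∀ θ' ∈ ratioSet red,
      θ ≠ θ' → pref i θ θ' ∨ pref i θ' θ)
    (hsame : ∀ i j : α, ∀ θ ∈ ratioSet red, ∀ θ' ∈ ratioSet red,
      θ ≠ 0 → θ ≠ 1 → θ' ≠ 0 → θ' ≠ 1 → (pref i θ θ' ↔ pref j θ θ')) :
    ∀ S : Finset α, S.Nonempty → ∃ T ⊆ S, T.Nonempty ∧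
      ∀ i ∈ T, ∀ T' ⊆ S, i ∈ T' →
        redRatio red T = redRatio red T' ∨ pref i (redRatio red T) (redRatio red T') :=
  stmt2_general red pref htrans htotal hsame
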